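/- Let R be a commutative ring, let D, S : R → R be derivations, let a, b ∈ R, and let n ≥ 0. For x ∈ R let L_x : R → R denote multiplication by x, and for an additive endomorphism T of R let Φ_x(T) := T∘L_x − L_x∘T. Then Φ_a^{n+1}( Φ_b( D^{∘(n+1)} ∘ S ) ) = (n+1)! · L_c, where c = (D a)^{n+1}·(S b) + (n+1)·(D a)^n·(D b)·(S a). -/
import Mathlib


/-- The commutator `Φ_x(T) = T ∘ L_x − L_x ∘ T` of an additive endomorphism `T`
with the multiplication operator `L_x`. -/
def mulComm' {R : Type*} [CommRing R] (x : R) (T : R → R) : R → R :=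
  fun y => T (x * y) - x * T y

section Aux

variable {R : Type*} [CommRing R]

lemma mc_add (x : R) (T₁ T₂ : R → R) :
    mulComm' x (fun y => T₁ y + T₂ y) = fun y => mulComm' x T₁ y + mulComm' x T₂ y := by
  funext y; simp only [mulComm']; ring

lemma mc_smul (x : R) (k : ℕ) (U : R → R) :
    mulComm' x (fun y => k • U y) = fun y => k • mulComm' x U y := by
  funext y; simp only [mulComm', smul_sub, mul_smul_comm]

lemma mc_mulLeft (x c : R) (T : R → R) :
    mulComm' x (fun y => c * T y) = fun y => c * mulComm' x T y := by
  funext y; simp only [mulComm']; ring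

lemma mc_kill (x c : R) (k : ℕ) :
    mulComm' x (fun y => k • (c * y)) = fun _ => 0 := by
  funext y
  simp only [mulComm', mul_smul_comm, ← smul_sub]
  rw [show c * (x * y) - x * (c * y) = 0 by ring, smul_zero]

lemma mc_iter_add (x : R) (m : ℕ) (T₁ T₂ : R → R) :
    (mulComm' x)^[m] (fun y => T₁ y + T₂ y)
      = fun y => (mulComm' x)^[m] T₁ y + (mulComm' x)^[m] T₂ y := by
  induction m generalizing T₁ T₂ with
  | zero => rfl
  | succ m ih =>
    rw [Function.iterate_succ_apply, Function.iterate_succ_apply,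
      Function.iterate_succ_apply, mc_add, ih]

lemma mc_iter_mulLeft (x c : R) (m : ℕ) (T : R → R) :
    (mulComm' x)^[m] (fun y => c * T y) = fun y => c * (mulComm' x)^[m] T y := by
  induction m generalizing T with
  | zero => rfl
  | succ m ih =>
    rw [Function.iterate_succ_apply, Function.iterate_succ_apply, mc_mulLeft, ih]

lemma mc_D (D : Derivation ℤ R R) (x : R) (T : R → R) :
    mulComm' x (⇑D ∘ T) = fun y => D (mulComm' x T y) + D x * T y := by
  funext y
  simp only [mulComm', Function.comp_apply, map_sub, Derivation.leibniz, smul_eq_mul]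
  ring

lemma mc_iterD (D : Derivation ℤ R R) (x : R) (m : ℕ) (T : R → R) :
    (mulComm' x)^[m + 1] (⇑D ∘ T)
      = fun y => D ((mulComm' x)^[m + 1] T y)
          + (m + 1) • (D x * (mulComm' x)^[m] T y) := by
  induction m with
  | zero =>
    simp only [zero_add, Function.iterate_one, Function.iterate_zero, id_eq, one_smul, mc_D]
  | succ m ih =>
    rw [Function.iterate_succ_apply' (mulComm' x) (m + 1), ih, mc_add]
    simp only [mc_smul, mc_mulLeft]
    simp only [show (fun y => D ((mulComm' x)^[m + 1] T y)) = ⇑D ∘ (mulComm' x)^[m + 1] T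
      from rfl, mc_D]
    funext y
    rw [show mulComm' x ((mulComm' x)^[m+1] T) y = (mulComm' x)^[m+1+1] T y from
          congrFun (Function.iterate_succ_apply' (mulComm' x) (m+1) T).symm y,
        show mulComm' x ((mulComm' x)^[m] T) y = (mulComm' x)^[m+1] T y from
          congrFun (Function.iterate_succ_apply' (mulComm' x) m T).symm y]
    simp only [nsmul_eq_mul]
    push_cast
    ring

end Aux

/-- for derivations `D, S` of a commutative ring `R`, `a, b ∈ R` and
`n ≥ 0`, `Φ_a^{n+1}( Φ_b( D^{∘(n+1)} ∘ S ) ) = (n+1)! · L_c` with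
`c = (D a)^{n+1}·(S b) + (n+1)·(D a)^n·(D b)·(S a)`. -/
theorem stmt14 {R : Type*} [CommRing R] (D S : Derivation ℤ R R) (a b : R) (n : ℕ) :
    (mulComm' a)^[n + 1] (mulComm' b ((⇑D)^[n + 1] ∘ ⇑S))
      = fun y => (n + 1).factorial •
          (((D a) ^ (n + 1) * S b + (n + 1) • ((D a) ^ n * D b * S a)) * y) := by
  induction n generalizing b with
  | zero =>
    funext y
    simp only [Function.iterate_one, mulComm', Function.comp_apply, map_sub,
      Derivation.leibniz, smul_eq_mul, Nat.factorial_one, one_smul, pow_one, pow_zero,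
      map_add, map_mul, zero_add, one_mul, Nat.cast_ofNat, Nat.cast_one]
    ring
  | succ n ih =>
    set T : R → R := (⇑D)^[n + 1] ∘ ⇑S with hTdef
    have hT : (⇑D)^[n + 2] ∘ ⇑S = ⇑D ∘ T := by
      rw [hTdef, Function.iterate_succ' (⇑D) (n + 1)]
      rfl
    rw [show n + 1 + 1 = n + 2 from rfl, hT, mc_D D b T]
    rw [mc_iter_add]
    have h1 : (mulComm' a)^[n + 2] (fun y => D (mulComm' b T y))
        = fun y => (n + 2) • (D a * (n + 1).factorial •
            (((D a) ^ (n + 1) * S b + (n + 1) • ((D a) ^ n * D b * S a)) * y)) := by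
      have hcomp : (fun y => D (mulComm' b T y)) = ⇑D ∘ mulComm' b T := rfl
      rw [hcomp, mc_iterD D a (n + 1) (mulComm' b T), ih b]
      have hz : (mulComm' a)^[n + 2] (mulComm' b T)
          = fun _ => (0 : R) := by
        rw [Function.iterate_succ_apply' (mulComm' a) (n + 1), ih b, mc_kill]
      rw [hz]
      funext y
      simp only [map_zero, zero_add]
    have h2 : (mulComm' a)^[n + 2] (fun y => D b * T y)
        = fun y => D b * (n + 1).factorial •
            (((D a) ^ (n + 1) * S a + (n + 1) • ((D a) ^ n * D a * S a)) * y) := by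
      rw [mc_iter_mulLeft]
      have : (mulComm' a)^[n + 2] T = (mulComm' a)^[n + 1] (mulComm' a T) := by
        rw [Function.iterate_succ_apply]
      rw [this, ih a]
    rw [h1, h2]
    funext y
    simp only [nsmul_eq_mul, Nat.factorial_succ, Nat.cast_mul, Nat.cast_add, Nat.cast_one]
    push_cast
    ring
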